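/- Let T be a symmetric third-order tensor on ℝ^n with an orthogonal decomposition T = Σ_{i=1}^k λ_i v_i^⊗3, where k ≥ 2, {v_1,…,v_k} is orthonormal and each λ_i > 0. Let θ₀ ∈ ℝ^n be such that (after relabeling indices) |λ_1 v_1ᵀθ₀| > |λ_i v_iᵀθ₀| for all i ∈ {2,…,k}, and |λ_2 v_2ᵀθ₀| ≥ |λ_i v_iᵀθ₀| for all i ∈ {2,…,k}. Define θ_t := T(I, θ_{t−1}, θ_{t−1})/‖T(I, θ_{t−1}, θ_{t−1})‖ for t = 1, 2, …. Then this sequence is well-defined, and for every t ≥ 1: ‖v_1 − θ_t‖² ≤ (2λ_1² Σ_{i=2}^k λ_i^{−2}) · |λ_2 v_2ᵀθ₀ / (λ_1 v_1ᵀθ₀)|^{2^{t+1}}. In particular, the tensor power iterations starting from θ₀ converge to v_1 at a quadratic rate. -/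

import Mathlib

open scoped BigOperators

noncomputable section

/-- Euclidean dot product on `ℝ^n`. -/
def dotp {n : ℕ} (u v : Fin n → ℝ) : ℝ := ∑ i, u i * v i

/-- Euclidean norm on `ℝ^n`. -/
def enorm' {n : ℕ} (u : Fin n → ℝ) : ℝ := Real.sqrt (∑ i, (u i) ^ 2)

/-- `T(I,u,u)` for the orthogonally decomposable tensor `T = ∑ i, λ i • (v i)^⊗3`. -/
def tmap {n k : ℕ} (lam : Fin k → ℝ) (v : Fin k → Fin n → ℝ) (u : Fin n → ℝ) :
    Fin n → ℝ :=
  ∑ i, (lam i * (dotp (v i) u) ^ 2) • v i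

/-- The tensor power iteration sequence started at `θ`. -/
def powSeq {n k : ℕ} (lam : Fin k → ℝ) (v : Fin k → Fin n → ℝ) (θ : Fin n → ℝ) :
    ℕ → Fin n → ℝ
  | 0 => θ
  | t + 1 => (enorm' (tmap lam v (powSeq lam v θ t)))⁻¹ • tmap lam v (powSeq lam v θ t)

/-!
In the coordinates `c i = ⟨v i, θ⟩`, one power step sends `λ i c i` to `(λ i c i)² / ‖T(I, θ, θ)‖`,
so the ratios `λ i c i / λ 0 c 0` are squared at every step and equal their initial values to
the power `2 ^ t`. For `t ≥ 1` the iterate is a unit vector in the span of the `v i` with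
`c 0 ≥ 0`, hence `‖v 0 - θ‖² = 2 - 2 c 0 ≤ 2 (1 - c 0²) = 2 ∑_{i ≠ 0} c i²`, and each `c i²`
is at most `λ 0² / λ i²` times the `2 ^ (t + 1)`-th power of the largest initial ratio.
-/

open Finset

section Dot

variable {n : ℕ}

lemma dotp_comm (u w : Fin n → ℝ) : dotp u w = dotp w u := dotProduct_comm u w

lemma dotp_smul (r : ℝ) (u w : Fin n → ℝ) : dotp u (r • w) = r * dotp u w :=
  dotProduct_smul r u w

lemma smul_dotp (r : ℝ) (u w : Fin n → ℝ) : dotp (r • u) w = r * dotp u w :=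
  smul_dotProduct r u w

lemma dotp_sub (u w z : Fin n → ℝ) : dotp u (w - z) = dotp u w - dotp u z :=
  dotProduct_sub u w z

lemma sub_dotp (u w z : Fin n → ℝ) : dotp (u - w) z = dotp u z - dotp w z :=
  sub_dotProduct u w z

lemma dotp_sum {ι : Type*} (s : Finset ι) (u : Fin n → ℝ) (w : ι → Fin n → ℝ) :
    dotp u (∑ i ∈ s, w i) = ∑ i ∈ s, dotp u (w i) :=
  dotProduct_sum u s w

lemma sum_dotp {ι : Type*} (s : Finset ι) (u : ι → Fin n → ℝ) (w : Fin n → ℝ) :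
    dotp (∑ i ∈ s, u i) w = ∑ i ∈ s, dotp (u i) w :=
  sum_dotProduct s u w

lemma dotp_zero (u : Fin n → ℝ) : dotp u 0 = 0 := dotProduct_zero u

lemma enorm'_sq (u : Fin n → ℝ) : enorm' u ^ 2 = dotp u u := by
  rw [enorm', Real.sq_sqrt (by positivity)]
  simp only [dotp, sq]

lemma enorm'_ne_zero {u : Fin n → ℝ} (hu : u ≠ 0) : enorm' u ≠ 0 := by
  intro h
  have : dotp u u = 0 := by rw [← enorm'_sq, h, sq, zero_mul]
  exact hu (dotProduct_self_eq_zero.mp this)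

lemma dotp_inv_enorm'_smul_self {u : Fin n → ℝ} (hu : u ≠ 0) :
    dotp ((enorm' u)⁻¹ • u) ((enorm' u)⁻¹ • u) = 1 := by
  have hnorm := enorm'_ne_zero hu
  rw [dotp_smul, smul_dotp, ← enorm'_sq]
  field_simp

end Dot

section Orthonormal

variable {n : ℕ} {ι : Type*} [Fintype ι] [DecidableEq ι] {v : ι → Fin n → ℝ}

lemma dotp_sum_smul (horth : ∀ i j, dotp (v i) (v j) = if i = j then 1 else 0)
    (a : ι → ℝ) (j : ι) : dotp (v j) (∑ i, a i • v i) = a j := by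
  simp [dotp_sum, dotp_smul, horth]

lemma dotp_self_sum_smul (horth : ∀ i j, dotp (v i) (v j) = if i = j then 1 else 0)
    (a : ι → ℝ) : dotp (∑ i, a i • v i) (∑ i, a i • v i) = ∑ i, a i ^ 2 := by
  simp only [sum_dotp, smul_dotp, dotp_sum_smul horth, sq]

lemma dotp_self_eq_sum_sq (horth : ∀ i j, dotp (v i) (v j) = if i = j then 1 else 0)
    {x : Fin n → ℝ} (hx : x = ∑ i, dotp (v i) x • v i) :
    dotp x x = ∑ i, dotp (v i) x ^ 2 := by
  conv_lhs => rw [hx]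
  exact dotp_self_sum_smul horth _

lemma sq_dotp_le_one (horth : ∀ i j, dotp (v i) (v j) = if i = j then 1 else 0)
    {x : Fin n → ℝ} (hx : x = ∑ i, dotp (v i) x • v i) (hunit : dotp x x = 1) (j : ι) :
    dotp (v j) x ^ 2 ≤ 1 := by
  rw [← hunit, dotp_self_eq_sum_sq horth hx]
  exact single_le_sum (fun i _ => sq_nonneg (dotp (v i) x)) (mem_univ j)

lemma enorm'_sub_sq_le (horth : ∀ i j, dotp (v i) (v j) = if i = j then 1 else 0)
    {x : Fin n → ℝ} (hx : x = ∑ i, dotp (v i) x • v i) (hunit : dotp x x = 1)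
    {j : ι} (hj : 0 ≤ dotp (v j) x) :
    enorm' (v j - x) ^ 2 ≤ 2 * ∑ i ∈ univ.erase j, dotp (v i) x ^ 2 := by
  have hparseval := dotp_self_eq_sum_sq horth hx
  have hvj : dotp (v j) (v j) = 1 := by simp [horth]
  have hexpand : enorm' (v j - x) ^ 2 = 2 - 2 * dotp (v j) x := by
    rw [enorm'_sq, dotp_sub, sub_dotp, sub_dotp, dotp_comm x (v j), hvj, hunit]
    ring
  have hrest : ∑ i ∈ univ.erase j, dotp (v i) x ^ 2 = 1 - dotp (v j) x ^ 2 := by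
    rw [sum_erase_eq_sub (mem_univ j), ← hparseval, hunit]
  have hle := sq_dotp_le_one horth hx hunit j
  rw [hexpand, hrest]
  nlinarith

end Orthonormal

section PowerIteration

variable {n k : ℕ} {lam : Fin k → ℝ} {v : Fin k → Fin n → ℝ}

lemma dotp_tmap (horth : ∀ i j, dotp (v i) (v j) = if i = j then 1 else 0)
    (u : Fin n → ℝ) (j : Fin k) : dotp (v j) (tmap lam v u) = lam j * dotp (v j) u ^ 2 :=
  dotp_sum_smul horth _ j

lemma tmap_ne_zero (horth : ∀ i j, dotp (v i) (v j) = if i = j then 1 else 0)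
    {u : Fin n → ℝ} {j : Fin k} (hj : lam j * dotp (v j) u ≠ 0) : tmap lam v u ≠ 0 := by
  intro h
  have hj0 := dotp_tmap (lam := lam) horth u j
  rw [h, dotp_zero] at hj0
  exact mul_ne_zero hj (right_ne_zero_of_mul hj) (by linear_combination -hj0)

lemma powSeq_succ (θ : Fin n → ℝ) (t : ℕ) :
    powSeq lam v θ (t + 1) = ∑ i, ((enorm' (tmap lam v (powSeq lam v θ t)))⁻¹ *
      (lam i * dotp (v i) (powSeq lam v θ t) ^ 2)) • v i := by
  rw [powSeq, tmap, smul_sum]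
  simp only [smul_smul]

lemma powSeq_succ_eq_sum_dotp (horth : ∀ i j, dotp (v i) (v j) = if i = j then 1 else 0)
    (θ : Fin n → ℝ) (t : ℕ) :
    powSeq lam v θ (t + 1) = ∑ i, dotp (v i) (powSeq lam v θ (t + 1)) • v i := by
  simp only [powSeq_succ θ t, dotp_sum_smul horth]

lemma dotp_powSeq_succ (horth : ∀ i j, dotp (v i) (v j) = if i = j then 1 else 0)
    (θ : Fin n → ℝ) (t : ℕ) (i : Fin k) :
    dotp (v i) (powSeq lam v θ (t + 1)) = (enorm' (tmap lam v (powSeq lam v θ t)))⁻¹ *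
      (lam i * dotp (v i) (powSeq lam v θ t) ^ 2) := by
  rw [powSeq_succ, dotp_sum_smul horth]

lemma lam_mul_dotp_powSeq_succ (horth : ∀ i j, dotp (v i) (v j) = if i = j then 1 else 0)
    (θ : Fin n → ℝ) (t : ℕ) (i : Fin k) :
    lam i * dotp (v i) (powSeq lam v θ (t + 1)) =
      (enorm' (tmap lam v (powSeq lam v θ t)))⁻¹ * (lam i * dotp (v i) (powSeq lam v θ t)) ^ 2 := by
  rw [dotp_powSeq_succ horth]
  ring

lemma lam_mul_dotp_powSeq_cross (horth : ∀ i j, dotp (v i) (v j) = if i = j then 1 else 0)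
    (θ : Fin n → ℝ) (i j : Fin k) (t : ℕ) :
    lam i * dotp (v i) (powSeq lam v θ t) * (lam j * dotp (v j) θ) ^ 2 ^ t =
      lam j * dotp (v j) (powSeq lam v θ t) * (lam i * dotp (v i) θ) ^ 2 ^ t := by
  induction t with
  | zero => simp only [powSeq, pow_zero, pow_one, mul_comm]
  | succ t ih =>
    rw [lam_mul_dotp_powSeq_succ horth, lam_mul_dotp_powSeq_succ horth, pow_succ 2 t, pow_mul,
      pow_mul]
    linear_combination (enorm' (tmap lam v (powSeq lam v θ t)))⁻¹ *
      (lam i * dotp (v i) (powSeq lam v θ t) * (lam j * dotp (v j) θ) ^ 2 ^ t +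
        lam j * dotp (v j) (powSeq lam v θ t) * (lam i * dotp (v i) θ) ^ 2 ^ t) * ih

lemma lam_mul_dotp_powSeq_ne_zero (horth : ∀ i j, dotp (v i) (v j) = if i = j then 1 else 0)
    {θ : Fin n → ℝ} {j : Fin k} (h : lam j * dotp (v j) θ ≠ 0) (t : ℕ) :
    lam j * dotp (v j) (powSeq lam v θ t) ≠ 0 := by
  induction t with
  | zero => exact h
  | succ t ih =>
    rw [lam_mul_dotp_powSeq_succ horth]
    exact mul_ne_zero (inv_ne_zero (enorm'_ne_zero (tmap_ne_zero horth ih))) (pow_ne_zero 2 ih)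

lemma sq_dotp_powSeq_le (horth : ∀ i j, dotp (v i) (v j) = if i = j then 1 else 0)
    {θ : Fin n → ℝ} {i j : Fin k} (hi : lam i ≠ 0) (hj : lam j * dotp (v j) θ ≠ 0) {t : ℕ}
    (hcj : dotp (v j) (powSeq lam v θ t) ^ 2 ≤ 1) {r : ℝ}
    (hr : |lam i * dotp (v i) θ / (lam j * dotp (v j) θ)| ≤ r) :
    dotp (v i) (powSeq lam v θ t) ^ 2 ≤ lam j ^ 2 * (lam i ^ 2)⁻¹ * r ^ 2 ^ (t + 1) := by
  set ρ := lam i * dotp (v i) θ / (lam j * dotp (v j) θ)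
  have hcoord : lam i * dotp (v i) (powSeq lam v θ t) =
      lam j * dotp (v j) (powSeq lam v θ t) * ρ ^ 2 ^ t := by
    have := lam_mul_dotp_powSeq_cross (lam := lam) horth θ i j t
    rw [div_pow]
    field_simp
    exact this
  have hsq : dotp (v i) (powSeq lam v θ t) ^ 2 =
      lam j ^ 2 * (lam i ^ 2)⁻¹ * (dotp (v j) (powSeq lam v θ t) ^ 2 * |ρ| ^ 2 ^ (t + 1)) := by
    rw [pow_succ 2 t, pow_mul, ← abs_pow, sq_abs]
    field_simp
    linear_combination (lam i * dotp (v i) (powSeq lam v θ t) +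
      lam j * dotp (v j) (powSeq lam v θ t) * ρ ^ 2 ^ t) * hcoord
  rw [hsq]
  gcongr
  calc dotp (v j) (powSeq lam v θ t) ^ 2 * |ρ| ^ 2 ^ (t + 1)
      ≤ 1 * r ^ 2 ^ (t + 1) := by gcongr
    _ = r ^ 2 ^ (t + 1) := one_mul _

end PowerIteration

/-- **Quadratic convergence of the tensor power method.**
Let `T = ∑_{i=1}^k λ_i v_i^⊗3` (orthonormal `v_i`, `λ_i > 0`, `k ≥ 2`), and suppose the
starting point `θ₀` satisfies `|λ_1 v_1ᵀθ₀| > |λ_i v_iᵀθ₀|` for all `i ≠ 1`, with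
`|λ_2 v_2ᵀθ₀|` the second largest of these values.  Then the power iteration sequence is
well defined, and for every `t ≥ 1`,
`‖v_1 − θ_t‖² ≤ (2 λ_1² ∑_{i≥2} λ_i⁻²) · |λ_2 v_2ᵀθ₀/(λ_1 v_1ᵀθ₀)|^(2^(t+1))`.
(The indices `1` and `2` of the paper are `0` and `1 : Fin k` here.) -/
theorem stmt10 {n k : ℕ} [NeZero k] (hk : 2 ≤ k)
    (lam : Fin k → ℝ) (hlam : ∀ i, 0 < lam i)
    (v : Fin k → Fin n → ℝ)
    (horth : ∀ i j, dotp (v i) (v j) = if i = j then 1 else 0)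
    (θ₀ : Fin n → ℝ)
    (hmax : ∀ i : Fin k, i ≠ 0 → |lam i * dotp (v i) θ₀| < |lam 0 * dotp (v 0) θ₀|)
    (hsecond : ∀ i : Fin k, i ≠ 0 →
      |lam i * dotp (v i) θ₀| ≤ |lam 1 * dotp (v 1) θ₀|) :
    (∀ t, tmap lam v (powSeq lam v θ₀ t) ≠ 0) ∧
    ∀ t : ℕ, 1 ≤ t →
      (enorm' (v 0 - powSeq lam v θ₀ t)) ^ 2
        ≤ (2 * (lam 0) ^ 2 * ∑ i ∈ Finset.univ.erase (0 : Fin k), ((lam i) ^ 2)⁻¹)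
          * |lam 1 * dotp (v 1) θ₀ / (lam 0 * dotp (v 0) θ₀)| ^ (2 ^ (t + 1)) := by
  have h10 : (1 : Fin k) ≠ 0 := by
    rw [Ne, Fin.one_eq_zero_iff]
    omega
  have h0 : lam 0 * dotp (v 0) θ₀ ≠ 0 := abs_pos.mp ((abs_nonneg _).trans_lt (hmax 1 h10))
  have hne : ∀ t, tmap lam v (powSeq lam v θ₀ t) ≠ 0 := fun t =>
    tmap_ne_zero horth (lam_mul_dotp_powSeq_ne_zero horth h0 t)
  refine ⟨hne, fun t ht => ?_⟩
  obtain ⟨s, rfl⟩ := Nat.exists_eq_add_of_le' ht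
  set θ := powSeq lam v θ₀ (s + 1)
  set r := |lam 1 * dotp (v 1) θ₀ / (lam 0 * dotp (v 0) θ₀)|
  have hx : θ = ∑ i, dotp (v i) θ • v i := powSeq_succ_eq_sum_dotp horth θ₀ s
  have hunit : dotp θ θ = 1 := dotp_inv_enorm'_smul_self (hne s)
  have hpos : 0 ≤ dotp (v 0) θ := by
    rw [dotp_powSeq_succ horth]
    exact mul_nonneg (inv_nonneg.mpr (Real.sqrt_nonneg _)) (mul_nonneg (hlam 0).le (sq_nonneg _))
  have hcoord : ∀ i ∈ univ.erase (0 : Fin k),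
      dotp (v i) θ ^ 2 ≤ lam 0 ^ 2 * (lam i ^ 2)⁻¹ * r ^ 2 ^ (s + 1 + 1) := fun i hi =>
    sq_dotp_powSeq_le horth (hlam i).ne' h0 (sq_dotp_le_one horth hx hunit 0) <| by
      simp only [r, abs_div]
      exact div_le_div_of_nonneg_right (hsecond i (ne_of_mem_erase hi)) (abs_nonneg _)
  calc enorm' (v 0 - θ) ^ 2
      ≤ 2 * ∑ i ∈ univ.erase 0, dotp (v i) θ ^ 2 := enorm'_sub_sq_le horth hx hunit hpos
    _ ≤ 2 * ∑ i ∈ univ.erase 0, lam 0 ^ 2 * (lam i ^ 2)⁻¹ * r ^ 2 ^ (s + 1 + 1) := by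
      gcongr with i hi
      exact hcoord i hi
    _ = _ := by
      rw [mul_sum, mul_sum, sum_mul]
      exact sum_congr rfl fun i _ => by ring

end
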